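/- Let δ > 0, 1 < p < 2, and let w₁, w₂ be positive C² functions on ℝ with w₁'' - δ²w₁ + μ₁w₁^{2p-1} + βw₁^{p-1}w₂^p = 0 and w₂'' - δ²w₂ + μ₂w₂^{2p-1} + βw₂^{p-1}w₁^p = 0 (μ₁, μ₂, β > 0). If (tₙ) is a sequence of local minimum points of w₁ with w₁(tₙ) → 0, then βw₂(tₙ)^p < δ²w₁(tₙ)^{2-p} for all n, and consequently w₂(tₙ) → 0 as well. -/

import Mathlib

/-!
At a local minimum `t` of `w₁` we have `w₁''(t) ≥ 0`, so the first equation gives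
`β w₁^{p-1} w₂^p < δ² w₁`; dividing by `w₁^{p-1} > 0` yields
`β w₂^p < δ² w₁^{2-p}`.
As `2 - p > 0`, the right-hand side tends to `0` along `tₙ`, hence so does `w₂(tₙ)^p`,
and therefore `w₂(tₙ)`.
-/

open Filter Topology

theorem IsLocalMin.deriv_deriv_nonneg {f : ℝ → ℝ} {t : ℝ} (h : IsLocalMin f t)
    (hc : ContinuousAt f t) : 0 ≤ deriv (deriv f) t := by
  by_contra! hneg
  -- A strict second-derivative test makes `t` a local maximum too, so `f` is locally constant.
  have hmax : IsLocalMax f t := isLocalMax_of_deriv_deriv_neg hneg h.deriv_eq_zero hc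
  have hconst : f =ᶠ[𝓝 t] fun _ => f t := by
    filter_upwards [h, hmax] with x hge hle using le_antisymm hle hge
  have hderiv : deriv f =ᶠ[𝓝 t] fun _ => 0 := by
    simpa using hconst.deriv
  simp [hderiv.deriv_eq] at hneg

theorem mul_rpow_lt_of_second_deriv_nonneg {x y c δ μ β p : ℝ} (hx : 0 < x) (hμ : 0 < μ)
    (hc : 0 ≤ c)
    (h : c - δ ^ 2 * x + μ * x ^ (2 * p - 1) + β * x ^ (p - 1) * y ^ p = 0) :
    β * y ^ p < δ ^ 2 * x ^ (2 - p) := by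
  have hsplit : x ^ (p - 1) * x ^ (2 - p) = x := by
    rw [← Real.rpow_add hx]; norm_num
  have hxp : 0 < x ^ (p - 1) := Real.rpow_pos_of_pos hx _
  have hμx : 0 < μ * x ^ (2 * p - 1) := mul_pos hμ (Real.rpow_pos_of_pos hx _)
  refine lt_of_mul_lt_mul_left ?_ hxp.le
  calc x ^ (p - 1) * (β * y ^ p) = β * x ^ (p - 1) * y ^ p := by ring
    _ < δ ^ 2 * x := by linarith
    _ = x ^ (p - 1) * (δ ^ 2 * x ^ (2 - p)) := by rw [mul_left_comm, hsplit]

theorem tendsto_zero_of_rpow_le {ι : Type*} {l : Filter ι} {y z : ι → ℝ} {p : ℝ}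
    (hp : 0 < p) (hy : ∀ i, 0 ≤ y i) (hle : ∀ i, y i ^ p ≤ z i)
    (hz : Tendsto z l (𝓝 0)) :
    Tendsto y l (𝓝 0) := by
  have hz_nonneg : ∀ i, 0 ≤ z i := fun i => (Real.rpow_nonneg (hy i) p).trans (hle i)
  have hroot : Tendsto (fun i => z i ^ p⁻¹) l (𝓝 0) := by
    simpa [Real.zero_rpow (inv_ne_zero hp.ne')] using
      hz.rpow_const (Or.inr (inv_nonneg.mpr hp.le))
  exact squeeze_zero hy
    (fun i => (Real.le_rpow_inv_iff_of_pos (hy i) (hz_nonneg i) hp).mpr (hle i)) hroot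

theorem stmt_9_general (δ μ₁ β p : ℝ) (hμ₁ : 0 < μ₁)
    (hβ : 0 < β) (hp₁ : 1 < p) (hp₂ : p < 2) (w₁ w₂ : ℝ → ℝ)
    (hw₁ : ContDiff ℝ 2 w₁)
    (hpos₁ : ∀ t, 0 < w₁ t) (hpos₂ : ∀ t, 0 < w₂ t)
    (heq₁ : ∀ t, deriv (deriv w₁) t - δ^2 * w₁ t + μ₁ * w₁ t ^ (2*p - 1)
      + β * w₁ t ^ (p - 1) * w₂ t ^ p = 0)
    (tn : ℕ → ℝ) (hmin : ∀ n, IsLocalMin w₁ (tn n))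
    (hlim : Tendsto (fun n => w₁ (tn n)) atTop (nhds 0)) :
    (∀ n, β * w₂ (tn n) ^ p < δ^2 * w₁ (tn n) ^ (2 - p)) ∧
    Tendsto (fun n => w₂ (tn n)) atTop (nhds 0) := by
  have hbound : ∀ n, β * w₂ (tn n) ^ p < δ^2 * w₁ (tn n) ^ (2 - p) := fun n =>
    mul_rpow_lt_of_second_deriv_nonneg (hpos₁ _) hμ₁
      ((hmin n).deriv_deriv_nonneg hw₁.continuous.continuousAt) (heq₁ _)
  refine ⟨hbound, tendsto_zero_of_rpow_le (by linarith) (fun n => (hpos₂ _).le)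
    (z := fun n => δ ^ 2 / β * w₁ (tn n) ^ (2 - p)) (fun n => ?_) ?_⟩
  · rw [div_mul_eq_mul_div, le_div_iff₀ hβ, mul_comm]
    exact (hbound n).le
  · have hpow : Tendsto (fun n => w₁ (tn n) ^ (2 - p)) atTop (𝓝 0) := by
      simpa [Real.zero_rpow (by linarith : 2 - p ≠ 0)] using
        hlim.rpow_const (Or.inr (by linarith : (0 : ℝ) ≤ 2 - p))
    simpa using hpow.const_mul (δ ^ 2 / β)

theorem stmt_9 (δ μ₁ μ₂ β p : ℝ) (hδ : 0 < δ) (hμ₁ : 0 < μ₁) (hμ₂ : 0 < μ₂)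
    (hβ : 0 < β) (hp₁ : 1 < p) (hp₂ : p < 2) (w₁ w₂ : ℝ → ℝ)
    (hw₁ : ContDiff ℝ 2 w₁) (hw₂ : ContDiff ℝ 2 w₂)
    (hpos₁ : ∀ t, 0 < w₁ t) (hpos₂ : ∀ t, 0 < w₂ t)
    (heq₁ : ∀ t, deriv (deriv w₁) t - δ^2 * w₁ t + μ₁ * w₁ t ^ (2*p - 1)
      + β * w₁ t ^ (p - 1) * w₂ t ^ p = 0)
    (heq₂ : ∀ t, deriv (deriv w₂) t - δ^2 * w₂ t + μ₂ * w₂ t ^ (2*p - 1)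
      + β * w₂ t ^ (p - 1) * w₁ t ^ p = 0)
    (tn : ℕ → ℝ) (hmin : ∀ n, IsLocalMin w₁ (tn n))
    (hlim : Tendsto (fun n => w₁ (tn n)) atTop (nhds 0)) :
    (∀ n, β * w₂ (tn n) ^ p < δ^2 * w₁ (tn n) ^ (2 - p)) ∧
    Tendsto (fun n => w₂ (tn n)) atTop (nhds 0) :=
  stmt_9_general δ μ₁ β p hμ₁ hβ hp₁ hp₂ w₁ w₂ hw₁ hpos₁ hpos₂ heq₁ tn hmin hlim
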